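/- arXiv:2510.03131 — 5 statements merged into one kernel-verified Lean document; each statement's English description precedes it below -/
import Mathlib

section
/- Let H be a real separable Hilbert space and V_1, …, V_n be H-valued random variables that are independent, have mean zero, and satisfy ‖V_i‖ ≤ B almost surely for a deterministic constant B < ∞. Then for every ε with 0 < ε < 2B, P(‖(1/n)∑_{i=1}^n V_i‖ > ε) ≤ 2 exp(−n ε² / (4B²)). -/
/-!
Pinelis' argument. Since `u ↦ cosh (t √u)` is convex on `[0, ∞)` and, for `‖v‖ ≤ b`, the value
`‖x + v‖²` lies below the point `‖x‖² + b² + 2⟪x, v⟫` of the segment between `(‖x‖ - b)²` and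
`(‖x‖ + b)²`, the function `v ↦ cosh (t ‖x + v‖)` is dominated on the ball by a function affine in
`⟪x, v⟫`. Averaging over a mean-zero `v` gives `E cosh (t ‖x + v‖) ≤ cosh (t ‖x‖) cosh (t b)`, so by
independence `E cosh (t ‖∑ Vᵢ‖) ≤ cosh (t B)ⁿ ≤ exp (n t² B² / 2)`. Markov's inequality for
`cosh (t ‖∑ Vᵢ‖)`, with `exp ≤ 2 cosh` and `t = r / (n B²)`, yields
`P (‖∑ Vᵢ‖ > r) ≤ 2 exp (-r² / (2 n B²))`; take `r = n ε`.
-/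

open MeasureTheory ProbabilityTheory

namespace Real

open Set

theorem sinh_le_mul_cosh {w : ℝ} (hw : 0 ≤ w) : sinh w ≤ w * cosh w := by
  have hmono : MonotoneOn (fun w ↦ w * cosh w - sinh w) (Ici 0) := by
    refine monotoneOn_of_deriv_nonneg (convex_Ici 0) (by fun_prop) (by fun_prop) fun x hx ↦ ?_
    rw [interior_Ici, mem_Ioi] at hx
    have hd : HasDerivAt (fun w ↦ w * cosh w - sinh w) (x * sinh x) x := by
      refine (((hasDerivAt_id x).mul (hasDerivAt_cosh x)).sub (hasDerivAt_sinh x)).congr_deriv ?_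
      simp
    rw [hd.deriv]
    exact mul_nonneg hx.le (sinh_nonneg_iff.2 hx.le)
  simpa using hmono self_mem_Ici hw hw

theorem monotoneOn_sinh_div_self : MonotoneOn (fun w ↦ sinh w / w) (Ioi 0) := by
  refine monotoneOn_of_deriv_nonneg (convex_Ioi 0)
    (continuous_sinh.continuousOn.div continuousOn_id fun x hx ↦ hx.ne')
    (fun x hx ↦ ?_) fun x hx ↦ ?_
  all_goals rw [interior_Ioi, mem_Ioi] at hx
  · exact ((differentiable_sinh x).div differentiableAt_id hx.ne').differentiableWithinAt
  · have hd : HasDerivAt (fun w ↦ sinh w / w) ((cosh x * x - sinh x * 1) / x ^ 2) x :=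
      (hasDerivAt_sinh x).div (hasDerivAt_id x) hx.ne'
    rw [hd.deriv]
    exact div_nonneg (by linarith [sinh_le_mul_cosh hx.le]) (sq_nonneg x)

theorem convexOn_cosh_mul_sqrt {t : ℝ} (ht : 0 ≤ t) :
    ConvexOn ℝ (Ici 0) fun u ↦ cosh (t * √u) := by
  rcases ht.eq_or_lt with rfl | ht
  · simpa using convexOn_const (1 : ℝ) (convex_Ici 0)
  have hd : ∀ u ∈ Ioi (0 : ℝ), HasDerivAt (fun u ↦ cosh (t * √u))
      (t ^ 2 / 2 * (sinh (t * √u) / (t * √u))) u := by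
    intro u hu
    have hsu : 0 < √u := sqrt_pos.2 hu
    refine ((hasDerivAt_cosh _).comp u ((hasDerivAt_sqrt hu.ne').const_mul t)).congr_deriv ?_
    field_simp
  refine MonotoneOn.convexOn_of_deriv (convex_Ici 0) (by fun_prop)
    (fun u hu ↦ ?_) ?_
  · rw [interior_Ici] at hu
    exact (hd u hu).differentiableAt.differentiableWithinAt
  rw [interior_Ici]
  intro u hu v hv huv
  rw [(hd u hu).deriv, (hd v hv).deriv]
  have hsu : 0 < √u := sqrt_pos.2 hu
  have hsv : 0 < √v := sqrt_pos.2 hv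
  refine mul_le_mul_of_nonneg_left ?_ (by positivity)
  exact monotoneOn_sinh_div_self (mul_pos ht hsu) (mul_pos ht hsv)
    (mul_le_mul_of_nonneg_left (sqrt_le_sqrt huv) ht.le)

theorem cosh_mul_sqrt_le_of_abs_le {t a b s : ℝ} (ht : 0 ≤ t) (ha : 0 ≤ a) (hb : 0 ≤ b)
    (hs : |s| ≤ a * b) :
    cosh (t * √(a ^ 2 + b ^ 2 + 2 * s)) ≤
      cosh (t * a) * cosh (t * b) + sinh (t * a) * sinh (t * b) / (a * b) * s := by
  rcases (mul_nonneg ha hb).eq_or_lt with hab | hab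
  · obtain rfl : s = 0 := abs_nonpos_iff.1 (hab ▸ hs)
    rcases mul_eq_zero.1 hab.symm with rfl | rfl
    · simp [sqrt_sq hb]
    · simp [sqrt_sq ha]
  have ha' : a ≠ 0 := by rintro rfl; simp at hab
  have hb' : b ≠ 0 := by rintro rfl; simp at hab
  -- `a² + b² + 2s` is the point of weight `θ` between `(a - b)²` and `(a + b)²`.
  set θ := (s + a * b) / (2 * (a * b)) with hθ
  have hθ₀ : 0 ≤ θ := div_nonneg (by linarith [neg_abs_le s]) (by positivity)
  have hθ₁ : θ ≤ 1 := (div_le_one (by positivity)).2 (by linarith [le_abs_self s])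
  have hconv := (convexOn_cosh_mul_sqrt ht).2 (mem_Ici.2 (sq_nonneg (a + b)))
    (mem_Ici.2 (sq_nonneg (a - b))) hθ₀ (sub_nonneg.2 hθ₁) (add_sub_cancel θ 1)
  have hpoint : θ * (a + b) ^ 2 + (1 - θ) * (a - b) ^ 2 = a ^ 2 + b ^ 2 + 2 * s := by
    rw [hθ]; field_simp; ring
  simp only [smul_eq_mul, hpoint, sqrt_sq (add_nonneg ha hb), sqrt_sq_eq_abs] at hconv
  have hdiff : cosh (t * |a - b|) = cosh (t * (a - b)) := by
    rw [← cosh_abs (t * (a - b)), abs_mul, abs_of_nonneg ht]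
  refine hconv.trans_eq ?_
  rw [hdiff, mul_add, mul_sub, cosh_add, cosh_sub, hθ]
  field_simp
  ring

end Real

section Hilbert

open Real
open scoped InnerProductSpace

variable {H : Type*} [NormedAddCommGroup H] [InnerProductSpace ℝ H]

theorem cosh_mul_norm_add_le {t b : ℝ} (ht : 0 ≤ t) (hb : 0 ≤ b) (x : H) {v : H}
    (hv : ‖v‖ ≤ b) :
    cosh (t * ‖x + v‖) ≤ cosh (t * ‖x‖) * cosh (t * b)
      + sinh (t * ‖x‖) * sinh (t * b) / (‖x‖ * b) * ⟪x, v⟫_ℝ := by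
  have hinner : |⟪x, v⟫_ℝ| ≤ ‖x‖ * b :=
    (abs_real_inner_le_norm x v).trans (mul_le_mul_of_nonneg_left hv (norm_nonneg x))
  have hnorm : ‖x + v‖ ≤ √(‖x‖ ^ 2 + b ^ 2 + 2 * ⟪x, v⟫_ℝ) := by
    refine le_sqrt_of_sq_le ?_
    rw [norm_add_sq_real]
    nlinarith [norm_nonneg v]
  calc cosh (t * ‖x + v‖) ≤ cosh (t * √(‖x‖ ^ 2 + b ^ 2 + 2 * ⟪x, v⟫_ℝ)) := by
        rw [cosh_le_cosh, abs_of_nonneg (by positivity), abs_of_nonneg (by positivity)]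
        gcongr
    _ ≤ _ := cosh_mul_sqrt_le_of_abs_le ht (norm_nonneg x) hb hinner

variable [MeasurableSpace H] [BorelSpace H] [SecondCountableTopology H] [CompleteSpace H]

theorem integral_cosh_mul_norm_add_le {ν : Measure H} [IsProbabilityMeasure ν] {t b : ℝ}
    (ht : 0 ≤ t) (hb : 0 ≤ b) (hν : ∀ᵐ v ∂ν, ‖v‖ ≤ b) (hmean : ∫ v, v ∂ν = 0) (x : H) :
    ∫ v, cosh (t * ‖x + v‖) ∂ν ≤ cosh (t * ‖x‖) * cosh (t * b) := by
  set c := sinh (t * ‖x‖) * sinh (t * b) / (‖x‖ * b)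
  have hid : Integrable (fun v : H ↦ v) ν := .of_bound aestronglyMeasurable_id b hν
  have hlin : Integrable (fun v ↦ cosh (t * ‖x‖) * cosh (t * b) + c * ⟪x, v⟫_ℝ) ν :=
    (integrable_const _).add ((hid.const_inner x).const_mul c)
  calc ∫ v, cosh (t * ‖x + v‖) ∂ν
      ≤ ∫ v, (cosh (t * ‖x‖) * cosh (t * b) + c * ⟪x, v⟫_ℝ) ∂ν :=
        integral_mono_of_nonneg (.of_forall fun v ↦ (cosh_pos _).le) hlin
          (hν.mono fun v hv ↦ cosh_mul_norm_add_le ht hb x hv)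
    _ = cosh (t * ‖x‖) * cosh (t * b) := by
        rw [integral_add (integrable_const _) ((hid.const_inner x).const_mul c),
          integral_const_mul c, integral_inner hid, hmean]
        simp

end Hilbert

namespace ProbabilityTheory

open Real Finset

variable {Ω : Type*} [MeasurableSpace Ω] {μ : Measure Ω} {H : Type*} [NormedAddCommGroup H]

theorem ae_norm_sum_le {ι : Type*} {V : ι → Ω → H} {B : ℝ} (hB : ∀ i, ∀ᵐ ω ∂μ, ‖V i ω‖ ≤ B)
    (s : Finset ι) : ∀ᵐ ω ∂μ, ‖∑ i ∈ s, V i ω‖ ≤ #s * B := by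
  filter_upwards [(Filter.eventually_all_finset s).2 fun i _ ↦ hB i] with ω hω
  simpa using norm_sum_le_of_le s hω

variable [MeasurableSpace H]

theorem integrable_cosh_mul_norm_of_ae_norm_le [IsFiniteMeasure μ] [OpensMeasurableSpace H]
    {X : Ω → H} (hX : AEMeasurable X μ) {C : ℝ} (hC : ∀ᵐ ω ∂μ, ‖X ω‖ ≤ C) (t : ℝ) :
    Integrable (fun ω ↦ cosh (t * ‖X ω‖)) μ := by
  refine .of_bound ((by fun_prop : Measurable fun x : H ↦ cosh (t * ‖x‖)).comp_aemeasurable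
    hX).aestronglyMeasurable (cosh (t * C)) (hC.mono fun ω hω ↦ ?_)
  rw [norm_of_nonneg (cosh_pos _).le, cosh_le_cosh, abs_mul, abs_mul, abs_norm]
  gcongr
  exact hω.trans (le_abs_self C)

variable [InnerProductSpace ℝ H] [BorelSpace H] [SecondCountableTopology H] [CompleteSpace H]

theorem IndepFun.integral_cosh_mul_norm_add_le [IsProbabilityMeasure μ] {X Y : Ω → H}
    (hXY : IndepFun X Y μ) (hX : Measurable X) (hY : Measurable Y) {C b t : ℝ}
    (hXC : ∀ᵐ ω ∂μ, ‖X ω‖ ≤ C) (hYb : ∀ᵐ ω ∂μ, ‖Y ω‖ ≤ b) (hYmean : ∫ ω, Y ω ∂μ = 0)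
    (hb : 0 ≤ b) (ht : 0 ≤ t) :
    ∫ ω, cosh (t * ‖X ω + Y ω‖) ∂μ ≤ cosh (t * b) * ∫ ω, cosh (t * ‖X ω‖) ∂μ := by
  set g : H → ℝ := fun z ↦ cosh (t * ‖z‖)
  have hg : Measurable g := by fun_prop
  have hXYC : ∀ᵐ ω ∂μ, ‖(X + Y) ω‖ ≤ C + b := by
    filter_upwards [hXC, hYb] with ω h₁ h₂
    exact (norm_add_le _ _).trans (add_le_add h₁ h₂)
  have hconv : μ.map (X + Y) = μ.map X ∗ μ.map Y := hXY.map_add_eq_map_conv_map hX hY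
  have hint : Integrable g (μ.map (X + Y)) :=
    (integrable_map_measure hg.aestronglyMeasurable (hX.add hY).aemeasurable).2
      (integrable_cosh_mul_norm_of_ae_norm_le (hX.add hY).aemeasurable hXYC t)
  have : IsProbabilityMeasure (μ.map X) := Measure.isProbabilityMeasure_map hX.aemeasurable
  have : IsProbabilityMeasure (μ.map Y) := Measure.isProbabilityMeasure_map hY.aemeasurable
  have hYlaw (x : H) : ∫ y, g (x + y) ∂(μ.map Y) ≤ g x * cosh (t * b) := by
    refine _root_.integral_cosh_mul_norm_add_le ht hb ?_ ?_ x
    · exact (ae_map_iff hY.aemeasurable (measurableSet_le (by fun_prop) (by fun_prop))).2 hYb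
    · exact (integral_map hY.aemeasurable aestronglyMeasurable_id).trans hYmean
  calc ∫ ω, g (X ω + Y ω) ∂μ = ∫ z, g z ∂(μ.map (X + Y)) :=
        (integral_map (hX.add hY).aemeasurable hg.aestronglyMeasurable).symm
    _ = ∫ x, ∫ y, g (x + y) ∂(μ.map Y) ∂(μ.map X) := by
        rw [hconv] at hint ⊢
        exact integral_conv hint
    _ ≤ ∫ x, g x * cosh (t * b) ∂(μ.map X) :=
        integral_mono_of_nonneg (.of_forall fun x ↦ integral_nonneg fun y ↦ (cosh_pos _).le)
          ((integrable_cosh_mul_norm_of_ae_norm_le aemeasurable_id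
            ((ae_map_iff hX.aemeasurable (measurableSet_le (by fun_prop) (by fun_prop))).2 hXC)
            t).mul_const _) (.of_forall hYlaw)
    _ = cosh (t * b) * ∫ ω, g (X ω) ∂μ := by
        rw [integral_mul_const, integral_map hX.aemeasurable hg.aestronglyMeasurable, mul_comm]

theorem iIndepFun.integral_cosh_mul_norm_sum_le [IsProbabilityMeasure μ] {ι : Type*}
    {V : ι → Ω → H} (hindep : iIndepFun V μ) (hmeas : ∀ i, Measurable (V i))
    (hmean : ∀ i, ∫ ω, V i ω ∂μ = 0) {B t : ℝ} (hB0 : 0 ≤ B)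
    (hB : ∀ i, ∀ᵐ ω ∂μ, ‖V i ω‖ ≤ B) (ht : 0 ≤ t) (s : Finset ι) :
    ∫ ω, cosh (t * ‖∑ i ∈ s, V i ω‖) ∂μ ≤ cosh (t * B) ^ #s := by
  classical
  induction s using Finset.induction_on with
  | empty => simp
  | insert i s hi ih =>
    have hindep_i : IndepFun (fun ω ↦ ∑ j ∈ s, V j ω) (V i) μ := by
      simpa only [Finset.sum_fn] using hindep.indepFun_finsetSum_of_notMem hmeas hi
    calc ∫ ω, cosh (t * ‖∑ j ∈ insert i s, V j ω‖) ∂μ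
        = ∫ ω, cosh (t * ‖∑ j ∈ s, V j ω + V i ω‖) ∂μ := by
          simp only [Finset.sum_insert hi, add_comm]
      _ ≤ cosh (t * B) * ∫ ω, cosh (t * ‖∑ j ∈ s, V j ω‖) ∂μ :=
          hindep_i.integral_cosh_mul_norm_add_le (Finset.measurable_sum s fun j _ ↦ hmeas j)
            (hmeas i) (ae_norm_sum_le hB s) (hB i) (hmean i) hB0 ht
      _ ≤ cosh (t * B) * cosh (t * B) ^ #s := by gcongr
      _ = cosh (t * B) ^ #(insert i s) := by rw [Finset.card_insert_of_notMem hi, pow_succ']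

theorem measureReal_lt_le_two_mul_exp_mul_integral_cosh [IsFiniteMeasure μ] {Y : Ω → ℝ}
    {t r : ℝ} (ht : 0 ≤ t) (hr : 0 ≤ r) (hY : Integrable (fun ω ↦ cosh (t * Y ω)) μ) :
    μ.real {ω | r < Y ω} ≤ 2 * exp (-(t * r)) * ∫ ω, cosh (t * Y ω) ∂μ := by
  have hsub : {ω | r < Y ω} ⊆ {ω | cosh (t * r) ≤ cosh (t * Y ω)} := fun ω (hω : r < Y ω) ↦ by
    rw [Set.mem_ofPred_eq, cosh_le_cosh, abs_of_nonneg (by positivity),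
      abs_of_nonneg (mul_nonneg ht (hr.trans hω.le))]
    gcongr
  have hmarkov := mul_meas_ge_le_integral_of_nonneg
    (.of_forall fun ω ↦ (cosh_pos (t * Y ω)).le) hY (cosh (t * r))
  have hexp : exp (t * r) ≤ 2 * cosh (t * r) := by
    rw [cosh_eq]; linarith [exp_pos (-(t * r))]
  rw [exp_neg, mul_comm 2, mul_assoc, le_inv_mul_iff₀ (exp_pos _)]
  calc exp (t * r) * μ.real {ω | r < Y ω}
      ≤ 2 * cosh (t * r) * μ.real {ω | cosh (t * r) ≤ cosh (t * Y ω)} :=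
        mul_le_mul hexp (measureReal_mono hsub) measureReal_nonneg (by positivity)
    _ ≤ 2 * ∫ ω, cosh (t * Y ω) ∂μ := by
        rw [mul_assoc]
        exact mul_le_mul_of_nonneg_left hmarkov zero_le_two

theorem iIndepFun.measureReal_lt_norm_sum_le [IsProbabilityMeasure μ] {ι : Type*}
    {V : ι → Ω → H} (hindep : iIndepFun V μ) (hmeas : ∀ i, Measurable (V i))
    (hmean : ∀ i, ∫ ω, V i ω ∂μ = 0) {B : ℝ} (hB0 : 0 ≤ B)
    (hB : ∀ i, ∀ᵐ ω ∂μ, ‖V i ω‖ ≤ B) (s : Finset ι) {r : ℝ} (hr : 0 ≤ r) :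
    μ.real {ω | r < ‖∑ i ∈ s, V i ω‖} ≤ 2 * exp (-r ^ 2 / (2 * #s * B ^ 2)) := by
  set t := r / (#s * B ^ 2)
  have ht : 0 ≤ t := by positivity
  have hexponent : -(t * r) + #s * ((t * B) ^ 2 / 2) = -r ^ 2 / (2 * #s * B ^ 2) := by
    rcases eq_or_ne ((#s : ℝ) * B ^ 2) 0 with hD | hD
    · simp [t, hD, mul_assoc]
    · have hs : (#s : ℝ) ≠ 0 := left_ne_zero_of_mul hD
      have hB' : B ≠ 0 := pow_ne_zero_iff two_ne_zero |>.1 (right_ne_zero_of_mul hD)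
      simp only [t]
      field_simp
      ring
  calc μ.real {ω | r < ‖∑ i ∈ s, V i ω‖}
      ≤ 2 * exp (-(t * r)) * ∫ ω, cosh (t * ‖∑ i ∈ s, V i ω‖) ∂μ :=
        measureReal_lt_le_two_mul_exp_mul_integral_cosh ht hr
          (integrable_cosh_mul_norm_of_ae_norm_le
            (Finset.measurable_sum s fun i _ ↦ hmeas i).aemeasurable (ae_norm_sum_le hB s) t)
    _ ≤ 2 * exp (-(t * r)) * cosh (t * B) ^ #s := by
        gcongr
        exact hindep.integral_cosh_mul_norm_sum_le hmeas hmean hB0 hB ht s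
    _ ≤ 2 * exp (-(t * r)) * exp ((t * B) ^ 2 / 2) ^ #s := by
        gcongr
        exact cosh_le_exp_half_sq _
    _ = 2 * exp (-r ^ 2 / (2 * #s * B ^ 2)) := by
        rw [← exp_nat_mul, mul_assoc, ← exp_add, hexponent]

end ProbabilityTheory

theorem stmt4_general
    {Ω : Type*} [MeasurableSpace Ω] (μ : Measure Ω) [IsProbabilityMeasure μ]
    {H : Type*} [NormedAddCommGroup H] [InnerProductSpace ℝ H]
    [MeasurableSpace H] [BorelSpace H] [SecondCountableTopology H] [CompleteSpace H]
    {n : ℕ} (hn : 0 < n)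
    (V : Fin n → Ω → H)
    (hindep : iIndepFun V μ)
    (hmeas : ∀ i, Measurable (V i))
    (hmean : ∀ i, ∫ ω, V i ω ∂μ = 0)
    (B : ℝ) (hBpos : 0 < B) (hB : ∀ i, ∀ᵐ ω ∂μ, ‖V i ω‖ ≤ B)
    (ε : ℝ) (hε : 0 < ε) :
    (μ {ω | ε < ‖(n : ℝ)⁻¹ • (∑ i, V i ω)‖}).toReal
      ≤ 2 * Real.exp (-(n * ε ^ 2) / (4 * B ^ 2)) := by
  have hn' : (0 : ℝ) < n := Nat.cast_pos.2 hn
  have hset : {ω | ε < ‖(n : ℝ)⁻¹ • (∑ i, V i ω)‖} = {ω | n * ε < ‖∑ i, V i ω‖} := by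
    ext ω
    rw [Set.mem_ofPred_eq, Set.mem_ofPred_eq, norm_smul, norm_inv, Real.norm_natCast,
      inv_mul_eq_div, lt_div_iff₀' hn']
  have hexponent : -(n * ε) ^ 2 / (2 * n * B ^ 2) ≤ -(n * ε ^ 2) / (4 * B ^ 2) := by
    rw [show -(n * ε) ^ 2 / (2 * n * B ^ 2) = -(n * ε ^ 2) / (2 * B ^ 2) by field_simp,
      neg_div, neg_div, neg_le_neg_iff]
    gcongr
    norm_num
  calc (μ {ω | ε < ‖(n : ℝ)⁻¹ • (∑ i, V i ω)‖}).toReal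
      = μ.real {ω | n * ε < ‖∑ i, V i ω‖} := by rw [hset, measureReal_def]
    _ ≤ 2 * Real.exp (-(n * ε) ^ 2 / (2 * n * B ^ 2)) := by
        simpa using hindep.measureReal_lt_norm_sum_le hmeas hmean hBpos.le hB Finset.univ
          (by positivity)
    _ ≤ 2 * Real.exp (-(n * ε ^ 2) / (4 * B ^ 2)) := by gcongr

/-- **Pinelis/Bernstein-type concentration in Hilbert space.** For independent
mean-zero `H`-valued random variables with `‖Vᵢ‖ ≤ B` a.s., and every
`0 < ε < 2B`, `P(‖(1/n)∑Vᵢ‖ > ε) ≤ 2 exp(−nε²/(4B²))`. -/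
theorem stmt4
    {Ω : Type*} [MeasurableSpace Ω] (μ : Measure Ω) [IsProbabilityMeasure μ]
    {H : Type*} [NormedAddCommGroup H] [InnerProductSpace ℝ H]
    [MeasurableSpace H] [BorelSpace H] [SecondCountableTopology H] [CompleteSpace H]
    {n : ℕ} (hn : 0 < n)
    (V : Fin n → Ω → H)
    (hindep : iIndepFun V μ)
    (hmeas : ∀ i, Measurable (V i))
    (hmean : ∀ i, ∫ ω, V i ω ∂μ = 0)
    (B : ℝ) (hBpos : 0 < B) (hB : ∀ i, ∀ᵐ ω ∂μ, ‖V i ω‖ ≤ B)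
    (ε : ℝ) (hε : 0 < ε) (hε2B : ε < 2 * B) :
    (μ {ω | ε < ‖(n : ℝ)⁻¹ • (∑ i, V i ω)‖}).toReal
      ≤ 2 * Real.exp (-(n * ε ^ 2) / (4 * B ^ 2)) :=
  stmt4_general μ hn V hindep hmeas hmean B hBpos hB ε hε
end

section
/- Let k_X and k_Y be bounded, non-negative, measurable positive-definite kernels on spaces X and Y with k_Y ≤ κ_Y, and define the product kernel k((x,y),(x',y')) = k_X(x,x') k_Y(y,y'). Fix a probability measure P_Y on Y and measurable families of conditionals P_{X|y}, Q_{X|y}. Form joint laws P̃(dx,dy) = P_Y(dy) P_{X|y}(dx) and Q̃(dx,dy) = P_Y(dy) Q_{X|y}(dx). Then MMD_k(P̃, Q̃) ≤ √κ_Y · E_{Y∼P_Y}[ MMD_{k_X}(P_{X|Y}, Q_{X|Y}) ]. -/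
open MeasureTheory

/-!
Fix `y`. On the fibre over `y` the product feature map satisfies
`⟪Φ x y, Φ x' y⟫ = k_Y(y, y) ⟪φ_X x, φ_X x'⟫`, so expanding squared norms of differences of mean
embeddings as double integrals of the kernel gives
`‖m_P(y) - m_Q(y)‖² = k_Y(y, y) ‖e_P(y) - e_Q(y)‖² ≤ κ_Y ‖e_P(y) - e_Q(y)‖²`, with `m` the
conditional embeddings under `Φ` and `e` those under `φ_X`. The joint embeddings are the
`P_Y`-integrals of the conditional ones, so the triangle inequality for the Bochner integral
finishes the proof.
-/

section MeanEmbedding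

variable {α E F : Type*} [MeasurableSpace α]
  [NormedAddCommGroup E] [InnerProductSpace ℝ E] [CompleteSpace E]
  [NormedAddCommGroup F] [InnerProductSpace ℝ F] [CompleteSpace F]

theorem inner_integral_integral {μ ν : Measure α} {f g : α → E}
    (hf : Integrable f μ) (hg : Integrable g ν) :
    inner ℝ (∫ x, f x ∂μ) (∫ x', g x' ∂ν) = ∫ x', ∫ x, inner ℝ (f x) (g x') ∂μ ∂ν := by
  rw [← integral_inner hg]
  refine integral_congr_ae (Filter.Eventually.of_forall fun x' => ?_)
  dsimp only
  rw [real_inner_comm, ← integral_inner hf]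
  exact integral_congr_ae (Filter.Eventually.of_forall fun x => real_inner_comm _ _)

variable {Φ : α → F} {φ : α → E} {c : ℝ}

theorem inner_integral_eq_mul_of_inner_eq_mul
    (h : ∀ x x', inner ℝ (Φ x) (Φ x') = c * inner ℝ (φ x) (φ x'))
    {μ ν : Measure α} (hΦμ : Integrable Φ μ) (hΦν : Integrable Φ ν)
    (hφμ : Integrable φ μ) (hφν : Integrable φ ν) :
    inner ℝ (∫ x, Φ x ∂μ) (∫ x, Φ x ∂ν) = c * inner ℝ (∫ x, φ x ∂μ) (∫ x, φ x ∂ν) := by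
  rw [inner_integral_integral hΦμ hΦν, inner_integral_integral hφμ hφν]
  simp_rw [h, integral_const_mul]

theorem norm_integral_sub_integral_sq_eq_mul_of_inner_eq_mul
    (h : ∀ x x', inner ℝ (Φ x) (Φ x') = c * inner ℝ (φ x) (φ x'))
    {μ ν : Measure α} (hΦμ : Integrable Φ μ) (hΦν : Integrable Φ ν)
    (hφμ : Integrable φ μ) (hφν : Integrable φ ν) :
    ‖(∫ x, Φ x ∂μ) - ∫ x, Φ x ∂ν‖ ^ 2 = c * ‖(∫ x, φ x ∂μ) - ∫ x, φ x ∂ν‖ ^ 2 := by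
  simp only [← real_inner_self_eq_norm_sq, inner_sub_left, inner_sub_right,
    inner_integral_eq_mul_of_inner_eq_mul h hΦμ hΦμ hφμ hφμ,
    inner_integral_eq_mul_of_inner_eq_mul h hΦμ hΦν hφμ hφν,
    inner_integral_eq_mul_of_inner_eq_mul h hΦν hΦμ hφν hφμ,
    inner_integral_eq_mul_of_inner_eq_mul h hΦν hΦν hφν hφν]
  ring

theorem norm_integral_sub_integral_le_of_inner_eq_mul
    (h : ∀ x x', inner ℝ (Φ x) (Φ x') = c * inner ℝ (φ x) (φ x')) {κ : ℝ} (hc : c ≤ κ)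
    {μ ν : Measure α} (hΦμ : Integrable Φ μ) (hΦν : Integrable Φ ν)
    (hφμ : Integrable φ μ) (hφν : Integrable φ ν) :
    ‖(∫ x, Φ x ∂μ) - ∫ x, Φ x ∂ν‖ ≤ Real.sqrt κ * ‖(∫ x, φ x ∂μ) - ∫ x, φ x ∂ν‖ := by
  set a := (∫ x, Φ x ∂μ) - ∫ x, Φ x ∂ν
  set b := (∫ x, φ x ∂μ) - ∫ x, φ x ∂ν
  have hsq : ‖a‖ ^ 2 ≤ κ * ‖b‖ ^ 2 := by
    rw [norm_integral_sub_integral_sq_eq_mul_of_inner_eq_mul h hΦμ hΦν hφμ hφν]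
    gcongr
  calc ‖a‖ = Real.sqrt (‖a‖ ^ 2) := (Real.sqrt_sq (norm_nonneg a)).symm
    _ ≤ Real.sqrt (κ * ‖b‖ ^ 2) := Real.sqrt_le_sqrt hsq
    _ = Real.sqrt κ * ‖b‖ := by rw [Real.sqrt_mul' κ (sq_nonneg _), Real.sqrt_sq (norm_nonneg b)]

end MeanEmbedding

theorem stmt7_general
    {X Y : Type*} [MeasurableSpace X] [MeasurableSpace Y]
    {HX H : Type*}
    [NormedAddCommGroup HX] [InnerProductSpace ℝ HX] [CompleteSpace HX]
    [NormedAddCommGroup H] [InnerProductSpace ℝ H] [CompleteSpace H]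
    (kX : X → X → ℝ) (kY : Y → Y → ℝ) (κY : ℝ)
    (φX : X → HX) (Φ : X → Y → H)
    (hkX : ∀ x x', kX x x' = inner ℝ (φX x) (φX x'))
    (hΦ : ∀ x y x' y', (inner ℝ (Φ x y) (Φ x' y') : ℝ) = kX x x' * kY y y')
    (hkYb : ∀ y y', kY y y' ≤ κY)
    (PY : Measure Y)
    (PX QX : Y → Measure X)
    (hintP : ∀ y, Integrable (fun x => Φ x y) (PX y))
    (hintQ : ∀ y, Integrable (fun x => Φ x y) (QX y))
    (hiP : Integrable (fun y => ∫ x, Φ x y ∂(PX y)) PY)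
    (hiQ : Integrable (fun y => ∫ x, Φ x y ∂(QX y)) PY)
    (hintPX : ∀ y, Integrable φX (PX y)) (hintQX : ∀ y, Integrable φX (QX y))
    (hMMDint : Integrable (fun y => ‖(∫ x, φX x ∂(PX y)) - ∫ x, φX x ∂(QX y)‖) PY) :
    ‖(∫ y, (∫ x, Φ x y ∂(PX y)) ∂PY) - ∫ y, (∫ x, Φ x y ∂(QX y)) ∂PY‖
      ≤ Real.sqrt κY * ∫ y, ‖(∫ x, φX x ∂(PX y)) - ∫ x, φX x ∂(QX y)‖ ∂PY := by
  have hpointwise : ∀ y, ‖(∫ x, Φ x y ∂(PX y)) - ∫ x, Φ x y ∂(QX y)‖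
      ≤ Real.sqrt κY * ‖(∫ x, φX x ∂(PX y)) - ∫ x, φX x ∂(QX y)‖ := fun y =>
    norm_integral_sub_integral_le_of_inner_eq_mul
      (fun x x' => by rw [hΦ, hkX, mul_comm]) (hkYb y y)
      (hintP y) (hintQ y) (hintPX y) (hintQX y)
  rw [← integral_sub hiP hiQ]
  calc _ ≤ ∫ y, ‖(∫ x, Φ x y ∂(PX y)) - ∫ x, Φ x y ∂(QX y)‖ ∂PY :=
        norm_integral_le_integral_norm _
    _ ≤ ∫ y, Real.sqrt κY * ‖(∫ x, φX x ∂(PX y)) - ∫ x, φX x ∂(QX y)‖ ∂PY :=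
        integral_mono_of_nonneg (Filter.Eventually.of_forall fun y => norm_nonneg _)
          (hMMDint.const_mul _) (Filter.Eventually.of_forall hpointwise)
    _ = _ := integral_const_mul _ _

/-- **Joint–conditional MMD reduction for product kernels.** With bounded non-negative
kernels `k_X`, `k_Y ≤ κ_Y`, product kernel feature map `Φ` (so that
`⟪Φ x y, Φ x' y'⟫ = k_X x x' · k_Y y y'`), a mixing law `P_Y` and conditionals
`P_{X|y}`, `Q_{X|y}`, the MMD between the joint laws `P_Y(dy)P_{X|y}(dx)` and
`P_Y(dy)Q_{X|y}(dx)` is at most `√κ_Y` times the `P_Y`-expectation of the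
conditional MMDs computed with `k_X`. -/
theorem stmt7
    {X Y : Type*} [MeasurableSpace X] [MeasurableSpace Y]
    {HX H : Type*}
    [NormedAddCommGroup HX] [InnerProductSpace ℝ HX] [CompleteSpace HX]
    [NormedAddCommGroup H] [InnerProductSpace ℝ H] [CompleteSpace H]
    (kX : X → X → ℝ) (kY : Y → Y → ℝ) (κY : ℝ)
    (φX : X → HX) (Φ : X → Y → H)
    (hkX : ∀ x x', kX x x' = inner ℝ (φX x) (φX x'))
    (hΦ : ∀ x y x' y', (inner ℝ (Φ x y) (Φ x' y') : ℝ) = kX x x' * kY y y')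
    (hkXnn : ∀ x x', 0 ≤ kX x x') (hkYnn : ∀ y y', 0 ≤ kY y y')
    (hkYb : ∀ y y', kY y y' ≤ κY)
    (PY : Measure Y) [IsProbabilityMeasure PY]
    (PX QX : Y → Measure X)
    [∀ y, IsProbabilityMeasure (PX y)] [∀ y, IsProbabilityMeasure (QX y)]
    (hintP : ∀ y, Integrable (fun x => Φ x y) (PX y))
    (hintQ : ∀ y, Integrable (fun x => Φ x y) (QX y))
    (hiP : Integrable (fun y => ∫ x, Φ x y ∂(PX y)) PY)
    (hiQ : Integrable (fun y => ∫ x, Φ x y ∂(QX y)) PY)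
    (hintPX : ∀ y, Integrable φX (PX y)) (hintQX : ∀ y, Integrable φX (QX y))
    (hMMDint : Integrable (fun y => ‖(∫ x, φX x ∂(PX y)) - ∫ x, φX x ∂(QX y)‖) PY) :
    ‖(∫ y, (∫ x, Φ x y ∂(PX y)) ∂PY) - ∫ y, (∫ x, Φ x y ∂(QX y)) ∂PY‖
      ≤ Real.sqrt κY * ∫ y, ‖(∫ x, φX x ∂(PX y)) - ∫ x, φX x ∂(QX y)‖ ∂PY :=
  stmt7_general kX kY κY φX Φ hkX hΦ hkYb PY PX QX hintP hintQ hiP hiQ hintPX hintQX hMMDint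
end

section
/- Let P and Q be probability measures on the same space with P absolutely continuous with respect to Q. Then the total variation distance satisfies ‖P − Q‖_TV ≤ √(1 − exp(−KL(P‖Q))), where KL denotes the Kullback–Leibler divergence (Bretagnolle–Huber inequality). -/
/-!
Write `f = dP/dQ` and `t = ‖P − Q‖_TV = (1/2)∫|f − 1| dQ`. The Bhattacharyya coefficient
`∫ √f dQ` is squeezed from both sides. Jensen's inequality for `exp` under `P` gives
`exp(−KL/2) ≤ ∫ exp(−(log f)/2) dP = ∫ √f dQ`. Splitting `√f = √(min f 1) · √(max f 1)` and
applying Cauchy–Schwarz gives `(∫ √f dQ)² ≤ (∫ min f 1)(∫ max f 1) = (1 − t)(1 + t)`.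
Hence `exp(−KL) ≤ 1 − t²`.
-/

open MeasureTheory Real

lemma Real.mul_exp_neg_log_div_two {a : ℝ} (ha : 0 ≤ a) : a * exp (-log a / 2) = √a := by
  rcases ha.eq_or_lt with rfl | ha
  · simp
  have hsqrt : √a = exp (log a / 2) := by rw [exp_half, exp_log ha]
  rw [neg_div, exp_neg, ← hsqrt, ← div_eq_mul_inv, div_eq_iff (sqrt_pos.mpr ha).ne',
    mul_self_sqrt ha.le]

namespace MeasureTheory

variable {α : Type*} [MeasurableSpace α] {μ : Measure α}

lemma Integrable.memLp_two_sqrt {g : α → ℝ} (hg : Integrable g μ) :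
    MemLp (fun x => √(g x)) 2 μ := by
  rw [memLp_two_iff_integrable_sq (continuous_sqrt.comp_aestronglyMeasurable hg.1)]
  simpa only [sq_sqrt'] using hg.pos_part

lemma integral_sqrt_mul_sqrt_le {g h : α → ℝ} (hg : Integrable g μ) (hh : Integrable h μ) :
    ∫ x, √(g x) * √(h x) ∂μ ≤ √(∫ x, max (g x) 0 ∂μ) * √(∫ x, max (h x) 0 ∂μ) := by
  have hLp := integral_mul_le_Lp_mul_Lq_of_nonneg HolderConjugate.two_two
    (.of_forall fun x => sqrt_nonneg (g x)) (.of_forall fun x => sqrt_nonneg (h x))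
    (by simpa using hg.memLp_two_sqrt) (by simpa using hh.memLp_two_sqrt)
  simpa only [rpow_two, sq_sqrt', ← sqrt_eq_rpow] using hLp

lemma integral_sqrt_le_sqrt_one_sub_sq [IsProbabilityMeasure μ] {f : α → ℝ}
    (hf : Integrable f μ) (hf0 : 0 ≤ᵐ[μ] f) (hf1 : ∫ x, f x ∂μ = 1) :
    ∫ x, √(f x) ∂μ ≤ √(1 - ((1 / 2) * ∫ x, |f x - 1| ∂μ) ^ 2) := by
  set t := (1 / 2) * ∫ x, |f x - 1| ∂μ
  have hmin_int : Integrable (fun x => min (f x) 1) μ := hf.inf (integrable_const 1)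
  have hmax_int : Integrable (fun x => max (f x) 1) μ := hf.sup (integrable_const 1)
  have hsum : ∫ x, min (f x) 1 ∂μ + ∫ x, max (f x) 1 ∂μ = 2 := by
    rw [← integral_add hmin_int hmax_int]
    simp only [min_add_max]
    rw [integral_add hf (integrable_const 1), hf1]
    norm_num
  have hdiff : ∫ x, max (f x) 1 ∂μ - ∫ x, min (f x) 1 ∂μ = 2 * t := by
    rw [← integral_sub hmax_int hmin_int]
    simp only [max_sub_min_eq_abs, abs_sub_comm (1 : ℝ), t]
    ring
  have hmin : ∫ x, max (min (f x) 1) 0 ∂μ = ∫ x, min (f x) 1 ∂μ := by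
    refine integral_congr_ae ?_
    filter_upwards [hf0] with x hx using max_eq_left (le_min hx zero_le_one)
  have hmax : ∫ x, max (max (f x) 1) 0 ∂μ = ∫ x, max (f x) 1 ∂μ := by
    simp only [max_eq_left (zero_le_one.trans (le_max_right _ _))]
  calc ∫ x, √(f x) ∂μ = ∫ x, √(min (f x) 1) * √(max (f x) 1) ∂μ := by
        simp only [← sqrt_mul' _ (zero_le_one.trans (le_max_right _ _)), min_mul_max, mul_one]
    _ ≤ √(∫ x, max (min (f x) 1) 0 ∂μ) * √(∫ x, max (max (f x) 1) 0 ∂μ) :=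
        integral_sqrt_mul_sqrt_le hmin_int hmax_int
    _ = √((1 - t) * (1 + t)) := by
        have ht : 0 ≤ t := by positivity
        rw [hmin, hmax, show ∫ x, min (f x) 1 ∂μ = 1 - t by linarith,
          show ∫ x, max (f x) 1 ∂μ = 1 + t by linarith, sqrt_mul' _ (by linarith)]
    _ = √(1 - t ^ 2) := by ring_nf

lemma exp_neg_integral_llr_div_two_le {P Q : Measure α} [IsProbabilityMeasure P]
    [IsFiniteMeasure Q] (hac : P ≪ Q) (hkl : Integrable (llr P Q) P) :
    exp (-(∫ x, llr P Q x ∂P) / 2) ≤ ∫ x, √(P.rnDeriv Q x).toReal ∂Q := by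
  have hchange : ∀ x, (P.rnDeriv Q x).toReal • exp (-llr P Q x / 2) = √(P.rnDeriv Q x).toReal :=
    fun x => mul_exp_neg_log_div_two ENNReal.toReal_nonneg
  have hint : Integrable (fun x => exp (-llr P Q x / 2)) P := by
    rw [← integrable_rnDeriv_smul_iff hac]
    simp only [hchange]
    exact Measure.integrable_toReal_rnDeriv.memLp_two_sqrt.integrable one_le_two
  calc exp (-(∫ x, llr P Q x ∂P) / 2) = exp (∫ x, -llr P Q x / 2 ∂P) := by
        rw [integral_div, integral_neg]
    _ ≤ ∫ x, exp (-llr P Q x / 2) ∂P :=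
        convexOn_exp.map_integral_le continuous_exp.continuousOn isClosed_univ
          (.of_forall fun _ => Set.mem_univ _) (hkl.neg.div_const 2) hint
    _ = ∫ x, √(P.rnDeriv Q x).toReal ∂Q := by
        rw [← integral_rnDeriv_smul hac]
        simp only [hchange]

end MeasureTheory

/-- **Bretagnolle–Huber inequality.** For probability measures `P ≪ Q`,
`‖P − Q‖_TV ≤ √(1 − exp(−KL(P‖Q)))`, where `‖P − Q‖_TV = (1/2)∫|dP/dQ − 1| dQ`
and `KL(P‖Q) = ∫ log(dP/dQ) dP`. -/
theorem stmt8
    {α : Type*} [MeasurableSpace α]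
    (P Q : Measure α) [IsProbabilityMeasure P] [IsProbabilityMeasure Q]
    (hac : P ≪ Q)
    (hkl : Integrable (fun x => Real.log (P.rnDeriv Q x).toReal) P) :
    (1 / 2) * ∫ x, |(P.rnDeriv Q x).toReal - 1| ∂Q
      ≤ Real.sqrt (1 - Real.exp (-∫ x, Real.log (P.rnDeriv Q x).toReal ∂P)) := by
  set t := (1 / 2) * ∫ x, |(P.rnDeriv Q x).toReal - 1| ∂Q
  set kl := ∫ x, Real.log (P.rnDeriv Q x).toReal ∂P
  have hbc : ∫ x, √(P.rnDeriv Q x).toReal ∂Q ≤ √(1 - t ^ 2) :=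
    integral_sqrt_le_sqrt_one_sub_sq Measure.integrable_toReal_rnDeriv
      (.of_forall fun _ => ENNReal.toReal_nonneg)
      (by rw [Measure.integral_toReal_rnDeriv hac, probReal_univ])
  have hexp : exp (-kl) ≤ 1 - t ^ 2 := by
    have h := (le_sqrt' (exp_pos _)).1 ((exp_neg_integral_llr_div_two_le hac hkl).trans hbc)
    rwa [← exp_nat_mul, Nat.cast_ofNat, mul_div_cancel₀ _ two_ne_zero] at h
  exact le_sqrt_of_sq_le (by linarith)
end

section
/- Let k be a bounded positive-definite kernel on X with sup_x k(x,x) ≤ K, and let conditionals Π₀(·|w,y) and Π₁(·|w,y) be probability kernels from (w,y) to X with Π₀(·|w,y) absolutely continuous with respect to Π₁(·|w,y) for almost every (w,y). Let P⁰ be a probability measure on pairs (W,Y). Then E_{(W,Y)∼P⁰}[ MMD_k(Π₀(·|W,Y), Π₁(·|W,Y)) ] ≤ 2√K · √(1 − exp(−E_{(W,Y)∼P⁰} KL(Π₀(·|W,Y) ‖ Π₁(·|W,Y)))). -/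
/-!
For each `z`, with `f = dΠ₀/dΠ₁`, the difference of mean embeddings is `∫ (f - 1) • φ dΠ₁`, so
its norm is at most `√K ‖f - 1‖_{L¹(Π₁)}`. With `B = ∫ √f dΠ₁`, Cauchy–Schwarz applied to
`|f - 1| = |√f - 1| (√f + 1)` gives `‖f - 1‖₁ ≤ 2 √(1 - B²)`, and Jensen for `exp` under `Π₀`
gives `B² ≥ exp (-KL)`: this is the Bretagnolle–Huber inequality. Averaging over `z`, Jensen for
the concave `√` and then for the convex `exp` moves the expectation inside `√(1 - exp (-·))`.
-/

open MeasureTheory Real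

section CauchySchwarz

variable {α : Type*} [MeasurableSpace α] {μ : Measure α}

lemma integral_mul_le_sqrt_integral_sq_mul_sqrt_integral_sq {f g : α → ℝ}
    (hf0 : 0 ≤ᵐ[μ] f) (hg0 : 0 ≤ᵐ[μ] g) (hf : MemLp f 2 μ) (hg : MemLp g 2 μ) :
    ∫ a, f a * g a ∂μ ≤ √(∫ a, f a ^ 2 ∂μ) * √(∫ a, g a ^ 2 ∂μ) := by
  have h := integral_mul_le_Lp_mul_Lq_of_nonneg Real.HolderConjugate.two_two hf0 hg0
    (by simpa using hf) (by simpa using hg)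
  simpa only [sqrt_eq_rpow, one_div, rpow_two] using h

end CauchySchwarz

section Divergence

variable {X : Type*} [MeasurableSpace X]

lemma integrable_sqrt_of_nonneg {ν : Measure X} [IsFiniteMeasure ν] {f : X → ℝ} (hf0 : 0 ≤ f)
    (hf : Integrable f ν) : Integrable (fun x => √(f x)) ν :=
  Integrable.mono' (hf.add (integrable_const 1))
    (continuous_sqrt.comp_aestronglyMeasurable hf.1) (ae_of_all _ fun x => by
      rw [norm_of_nonneg (sqrt_nonneg _), Pi.add_apply]
      nlinarith [sq_sqrt (hf0 x), sqrt_nonneg (f x)])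

lemma integral_abs_sub_one_le_two_mul_sqrt_one_sub_sq {ν : Measure X} [IsProbabilityMeasure ν]
    {f : X → ℝ} (hf0 : 0 ≤ f) (hf : Integrable f ν) (hf1 : ∫ x, f x ∂ν = 1) :
    ∫ x, |f x - 1| ∂ν ≤ 2 * √(1 - (∫ x, √(f x) ∂ν) ^ 2) := by
  set B := ∫ x, √(f x) ∂ν
  have hs_meas : AEStronglyMeasurable (fun x => √(f x)) ν :=
    continuous_sqrt.comp_aestronglyMeasurable hf.1
  have hs : Integrable (fun x => √(f x)) ν := integrable_sqrt_of_nonneg hf0 hf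
  have hsq : ∀ (c : ℝ) x, (√(f x) + c) ^ 2 = f x + 2 * c * √(f x) + c ^ 2 := fun c x => by
    nlinarith [sq_sqrt (hf0 x)]
  have hsq_int : ∀ c : ℝ, Integrable (fun x => (√(f x) + c) ^ 2) ν := fun c => by
    simp_rw [hsq c]
    exact (hf.add (hs.const_mul _)).add (integrable_const _)
  have hsq_eq : ∀ c : ℝ, ∫ x, (√(f x) + c) ^ 2 ∂ν = 1 + 2 * c * B + c ^ 2 := fun c => by
    simp_rw [hsq c]
    have hlin : Integrable (fun x => f x + 2 * c * √(f x)) ν := hf.add (hs.const_mul _)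
    rw [integral_add hlin (integrable_const _), integral_add hf (hs.const_mul _),
      integral_const_mul, hf1]
    simp [B]
  have hmem : ∀ c : ℝ, MemLp (fun x => √(f x) + c) 2 ν := fun c =>
    (memLp_two_iff_integrable_sq (hs_meas.add aestronglyMeasurable_const)).2 (hsq_int c)
  have hfactor : ∀ x, |f x - 1| = |√(f x) + -1| * (√(f x) + 1) := fun x => by
    rw [← abs_of_nonneg (by positivity : 0 ≤ √(f x) + 1), ← abs_mul]
    congr 1
    nlinarith [sq_sqrt (hf0 x)]
  calc ∫ x, |f x - 1| ∂ν
      = ∫ x, |√(f x) + -1| * (√(f x) + 1) ∂ν := by simp_rw [hfactor]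
    _ ≤ √(∫ x, |√(f x) + -1| ^ 2 ∂ν) * √(∫ x, (√(f x) + 1) ^ 2 ∂ν) :=
        integral_mul_le_sqrt_integral_sq_mul_sqrt_integral_sq
          (ae_of_all _ fun _ => abs_nonneg _) (ae_of_all _ fun _ => by positivity)
          (hmem (-1)).abs (hmem 1)
    _ = 2 * √(1 - B ^ 2) := by
        have hB : 0 ≤ B := integral_nonneg fun x => sqrt_nonneg _
        simp_rw [sq_abs, hsq_eq]
        rw [← sqrt_mul' _ (by positivity),
          show (1 + 2 * -1 * B + (-1) ^ 2) * (1 + 2 * 1 * B + 1 ^ 2) = 2 ^ 2 * (1 - B ^ 2) by ring,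
          sqrt_mul (by positivity), sqrt_sq zero_le_two]

lemma mul_exp_neg_half_log {t : ℝ} (ht : 0 ≤ t) : t * exp (-(log t / 2)) = √t := by
  rcases ht.eq_or_lt with rfl | ht
  · simp
  · rw [exp_neg, exp_half, exp_log ht, ← div_eq_mul_inv, div_sqrt]

lemma exp_neg_integral_llr_le_sq_integral_sqrt_rnDeriv {μ ν : Measure X} [IsProbabilityMeasure μ]
    [IsFiniteMeasure ν] (hμν : μ ≪ ν) (hllr : Integrable (llr μ ν) μ) :
    exp (-∫ x, llr μ ν x ∂μ) ≤ (∫ x, √((μ.rnDeriv ν x).toReal) ∂ν) ^ 2 := by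
  have hdensity : ∀ x, (μ.rnDeriv ν x).toReal • exp (-(llr μ ν x / 2))
      = √((μ.rnDeriv ν x).toReal) := fun x => mul_exp_neg_half_log ENNReal.toReal_nonneg
  have hint : Integrable (fun x => exp (-(llr μ ν x / 2))) μ := by
    rw [← integrable_rnDeriv_smul_iff hμν]
    simpa only [hdensity] using
      integrable_sqrt_of_nonneg (fun _ => ENNReal.toReal_nonneg) Measure.integrable_toReal_rnDeriv
  have hjensen : exp (∫ x, -(llr μ ν x / 2) ∂μ) ≤ ∫ x, exp (-(llr μ ν x / 2)) ∂μ :=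
    convexOn_exp.map_integral_le continuous_exp.continuousOn isClosed_univ
      (ae_of_all _ fun _ => Set.mem_univ _) (hllr.div_const 2).neg hint
  calc exp (-∫ x, llr μ ν x ∂μ) = exp (∫ x, -(llr μ ν x / 2) ∂μ) ^ 2 := by
        rw [sq, ← exp_add, integral_neg, integral_div]
        ring_nf
    _ ≤ (∫ x, exp (-(llr μ ν x / 2)) ∂μ) ^ 2 := by gcongr
    _ = (∫ x, √((μ.rnDeriv ν x).toReal) ∂ν) ^ 2 := by
        rw [← integral_rnDeriv_smul hμν]
        simp only [hdensity]

lemma integral_abs_toReal_rnDeriv_sub_one_le {μ ν : Measure X} [IsProbabilityMeasure μ]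
    [IsProbabilityMeasure ν] (hμν : μ ≪ ν) (hllr : Integrable (llr μ ν) μ) :
    ∫ x, |(μ.rnDeriv ν x).toReal - 1| ∂ν ≤ 2 * √(1 - exp (-∫ x, llr μ ν x ∂μ)) := by
  have hmass : ∫ x, (μ.rnDeriv ν x).toReal ∂ν = 1 := by
    simp [Measure.integral_toReal_rnDeriv hμν]
  calc ∫ x, |(μ.rnDeriv ν x).toReal - 1| ∂ν
      ≤ 2 * √(1 - (∫ x, √((μ.rnDeriv ν x).toReal) ∂ν) ^ 2) :=
        integral_abs_sub_one_le_two_mul_sqrt_one_sub_sq (fun _ => ENNReal.toReal_nonneg)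
          Measure.integrable_toReal_rnDeriv hmass
    _ ≤ 2 * √(1 - exp (-∫ x, llr μ ν x ∂μ)) := by
        gcongr
        exact exp_neg_integral_llr_le_sq_integral_sqrt_rnDeriv hμν hllr

lemma norm_integral_sub_integral_le_mul_integral_abs_rnDeriv_sub_one
    {E : Type*} [NormedAddCommGroup E] [NormedSpace ℝ E] {μ ν : Measure X} [IsFiniteMeasure μ]
    [IsFiniteMeasure ν] (hμν : μ ≪ ν) {φ : X → E} (hμ : Integrable φ μ) (hν : Integrable φ ν)
    {C : ℝ} (hC : ∀ x, ‖φ x‖ ≤ C) :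
    ‖(∫ x, φ x ∂μ) - ∫ x, φ x ∂ν‖ ≤ C * ∫ x, |(μ.rnDeriv ν x).toReal - 1| ∂ν := by
  have hweighted : Integrable (fun x => (μ.rnDeriv ν x).toReal • φ x) ν :=
    (integrable_rnDeriv_smul_iff hμν).2 hμ
  calc ‖(∫ x, φ x ∂μ) - ∫ x, φ x ∂ν‖
      = ‖∫ x, ((μ.rnDeriv ν x).toReal - 1) • φ x ∂ν‖ := by
        simp_rw [sub_smul, one_smul]
        rw [integral_sub hweighted hν, integral_rnDeriv_smul hμν]
    _ ≤ ∫ x, |(μ.rnDeriv ν x).toReal - 1| * C ∂ν := by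
        refine norm_integral_le_of_norm_le
          ((Measure.integrable_toReal_rnDeriv.sub (integrable_const 1)).abs.mul_const C)
          (ae_of_all _ fun x => ?_)
        rw [norm_smul, norm_eq_abs]
        exact mul_le_mul_of_nonneg_left (hC x) (abs_nonneg _)
    _ = C * ∫ x, |(μ.rnDeriv ν x).toReal - 1| ∂ν := by rw [integral_mul_const, mul_comm]

lemma norm_integral_sub_integral_le_two_mul_sqrt_one_sub_exp_neg_integral_llr
    {E : Type*} [NormedAddCommGroup E] [NormedSpace ℝ E] {μ ν : Measure X}
    [IsProbabilityMeasure μ] [IsProbabilityMeasure ν] (hμν : μ ≪ ν) (hllr : Integrable (llr μ ν) μ)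
    {φ : X → E} (hμ : Integrable φ μ) (hν : Integrable φ ν) {C : ℝ} (hC0 : 0 ≤ C)
    (hC : ∀ x, ‖φ x‖ ≤ C) :
    ‖(∫ x, φ x ∂μ) - ∫ x, φ x ∂ν‖ ≤ 2 * C * √(1 - exp (-∫ x, llr μ ν x ∂μ)) :=
  calc ‖(∫ x, φ x ∂μ) - ∫ x, φ x ∂ν‖
      ≤ C * ∫ x, |(μ.rnDeriv ν x).toReal - 1| ∂ν :=
        norm_integral_sub_integral_le_mul_integral_abs_rnDeriv_sub_one hμν hμ hν hC
    _ ≤ C * (2 * √(1 - exp (-∫ x, llr μ ν x ∂μ))) := by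
        gcongr
        exact integral_abs_toReal_rnDeriv_sub_one_le hμν hllr
    _ = 2 * C * √(1 - exp (-∫ x, llr μ ν x ∂μ)) := by ring

end Divergence

section Jensen

variable {Ω : Type*} [MeasurableSpace Ω] {P : Measure Ω} {u : Ω → ℝ}

lemma integrable_sqrt_one_sub_exp_neg [IsFiniteMeasure P] (hu : AEStronglyMeasurable u P) :
    Integrable (fun ω => √(1 - exp (-u ω))) P :=
  Integrable.of_bound
    ((continuous_sqrt.comp (continuous_const.sub (continuous_exp.comp continuous_neg))
      ).comp_aestronglyMeasurable hu) 1 (ae_of_all _ fun ω => by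
      rw [norm_of_nonneg (sqrt_nonneg _)]
      exact sqrt_le_one.2 (by linarith [exp_pos (-u ω)]))

lemma integral_sqrt_one_sub_exp_neg_le [IsProbabilityMeasure P] (hu0 : 0 ≤ᵐ[P] u)
    (hu : Integrable u P) :
    ∫ ω, √(1 - exp (-u ω)) ∂P ≤ √(1 - exp (-∫ ω, u ω ∂P)) := by
  have hexp_le : ∀ᵐ ω ∂P, exp (-u ω) ≤ 1 := hu0.mono fun ω h => exp_le_one_iff.2 (by simpa using h)
  have hexp : Integrable (fun ω => exp (-u ω)) P :=
    Integrable.of_bound (continuous_exp.comp_aestronglyMeasurable hu.1.neg) 1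
      (hexp_le.mono fun ω h => by rwa [norm_of_nonneg (exp_pos _).le])
  have hjensen : exp (∫ ω, -u ω ∂P) ≤ ∫ ω, exp (-u ω) ∂P :=
    convexOn_exp.map_integral_le continuous_exp.continuousOn isClosed_univ
      (ae_of_all _ fun _ => Set.mem_univ _) hu.neg hexp
  calc ∫ ω, √(1 - exp (-u ω)) ∂P
      ≤ √(∫ ω, (1 - exp (-u ω)) ∂P) :=
        strictConcaveOn_sqrt.concaveOn.le_map_integral continuous_sqrt.continuousOn isClosed_Ici
          (hexp_le.mono fun ω h => sub_nonneg.2 h) ((integrable_const 1).sub hexp)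
          (integrable_sqrt_one_sub_exp_neg hu.1)
    _ ≤ √(1 - exp (-∫ ω, u ω ∂P)) := by
        rw [integral_sub (integrable_const 1) hexp, integral_const, probReal_univ, one_smul,
          ← integral_neg]
        gcongr

end Jensen

theorem stmt9_general
    {X Z : Type*} [MeasurableSpace X] [MeasurableSpace Z]
    {H : Type*} [NormedAddCommGroup H] [InnerProductSpace ℝ H]
    (k : X → X → ℝ) (φ : X → H)
    (hk : ∀ x x', k x x' = inner ℝ (φ x) (φ x'))
    (K : ℝ) (hK : ∀ x, k x x ≤ K)
    (Pi0 Pi1 : Z → Measure X)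
    [∀ z, IsProbabilityMeasure (Pi0 z)] [∀ z, IsProbabilityMeasure (Pi1 z)]
    (P0 : Measure Z) [IsProbabilityMeasure P0]
    (hac : ∀ᵐ z ∂P0, Pi0 z ≪ Pi1 z)
    (hint0 : ∀ z, Integrable φ (Pi0 z)) (hint1 : ∀ z, Integrable φ (Pi1 z))
    (hmmd : Integrable (fun z => ‖(∫ x, φ x ∂(Pi0 z)) - ∫ x, φ x ∂(Pi1 z)‖) P0)
    (hklz : ∀ z, Integrable (fun x => Real.log ((Pi0 z).rnDeriv (Pi1 z) x).toReal) (Pi0 z))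
    (hkl : Integrable
      (fun z => ∫ x, Real.log ((Pi0 z).rnDeriv (Pi1 z) x).toReal ∂(Pi0 z)) P0) :
    ∫ z, ‖(∫ x, φ x ∂(Pi0 z)) - ∫ x, φ x ∂(Pi1 z)‖ ∂P0
      ≤ 2 * Real.sqrt K *
        Real.sqrt (1 - Real.exp
          (-(∫ z, (∫ x, Real.log ((Pi0 z).rnDeriv (Pi1 z) x).toReal ∂(Pi0 z)) ∂P0))) := by
  set KL : Z → ℝ := fun z => ∫ x, llr (Pi0 z) (Pi1 z) x ∂(Pi0 z)
  have hφ : ∀ x, ‖φ x‖ ≤ √K := fun x =>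
    le_sqrt_of_sq_le (by rw [← real_inner_self_eq_norm_sq, ← hk]; exact hK x)
  have hKL_nonneg : 0 ≤ᵐ[P0] KL := by
    filter_upwards [hac] with z hz
    simpa using InformationTheory.integral_llr_add_sub_measure_univ_nonneg hz (hklz z)
  have hpointwise : ∀ᵐ z ∂P0, ‖(∫ x, φ x ∂(Pi0 z)) - ∫ x, φ x ∂(Pi1 z)‖
      ≤ 2 * √K * √(1 - exp (-KL z)) := by
    filter_upwards [hac] with z hz
    exact norm_integral_sub_integral_le_two_mul_sqrt_one_sub_exp_neg_integral_llr hz (hklz z)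
      (hint0 z) (hint1 z) (sqrt_nonneg K) hφ
  calc ∫ z, ‖(∫ x, φ x ∂(Pi0 z)) - ∫ x, φ x ∂(Pi1 z)‖ ∂P0
      ≤ ∫ z, 2 * √K * √(1 - exp (-KL z)) ∂P0 :=
        integral_mono_ae hmmd ((integrable_sqrt_one_sub_exp_neg hkl.1).const_mul _) hpointwise
    _ = 2 * √K * ∫ z, √(1 - exp (-KL z)) ∂P0 := integral_const_mul _ _
    _ ≤ 2 * √K * √(1 - exp (-∫ z, KL z ∂P0)) := by
        gcongr
        exact integral_sqrt_one_sub_exp_neg_le hKL_nonneg hkl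

/-- **Expected MMD bound via KL.** For probability kernels `Pi0(·|z)`, `Pi1(·|z)` into
`X`, a bounded kernel `k` on `X` with `sup_x k(x,x) ≤ K` and feature map `φ`, and a
law `P⁰` on `z = (w,y)`, with `Pi0(·|z) ≪ Pi1(·|z)` a.e., the expected MMD is bounded by
`2√K · √(1 − exp(−E KL(Pi0(·|z) ‖ Pi1(·|z))))`. -/
theorem stmt9
    {X Z : Type*} [MeasurableSpace X] [MeasurableSpace Z]
    {H : Type*} [NormedAddCommGroup H] [InnerProductSpace ℝ H] [CompleteSpace H]
    (k : X → X → ℝ) (φ : X → H)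
    (hk : ∀ x x', k x x' = inner ℝ (φ x) (φ x'))
    (K : ℝ) (hK : ∀ x, k x x ≤ K)
    (Pi0 Pi1 : Z → Measure X)
    [∀ z, IsProbabilityMeasure (Pi0 z)] [∀ z, IsProbabilityMeasure (Pi1 z)]
    (P0 : Measure Z) [IsProbabilityMeasure P0]
    (hac : ∀ᵐ z ∂P0, Pi0 z ≪ Pi1 z)
    (hint0 : ∀ z, Integrable φ (Pi0 z)) (hint1 : ∀ z, Integrable φ (Pi1 z))
    (hmmd : Integrable (fun z => ‖(∫ x, φ x ∂(Pi0 z)) - ∫ x, φ x ∂(Pi1 z)‖) P0)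
    (hklz : ∀ z, Integrable (fun x => Real.log ((Pi0 z).rnDeriv (Pi1 z) x).toReal) (Pi0 z))
    (hkl : Integrable
      (fun z => ∫ x, Real.log ((Pi0 z).rnDeriv (Pi1 z) x).toReal ∂(Pi0 z)) P0) :
    ∫ z, ‖(∫ x, φ x ∂(Pi0 z)) - ∫ x, φ x ∂(Pi1 z)‖ ∂P0
      ≤ 2 * Real.sqrt K *
        Real.sqrt (1 - Real.exp
          (-(∫ z, (∫ x, Real.log ((Pi0 z).rnDeriv (Pi1 z) x).toReal ∂(Pi0 z)) ∂P0))) :=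
  stmt9_general k φ hk K hK Pi0 Pi1 P0 hac hint0 hint1 hmmd hklz hkl
end

section
/- Let X, W, Y be random variables with W = X + N (or X = W + N) where N is independent noise with law F_N, and Y arbitrary. Let k = k_X ⊗ k_Y be a product kernel with k_X translation invariant, k_X(x,x') = ψ(x−x'), 0 ≤ k_X ≤ κ_X, 0 ≤ k_Y ≤ κ_Y. Then MMD_k(Law(X,Y), Law(W,Y)) ≤ √2 · κ_Y^{1/2} · κ_X^{1/4} · √(MMD_{k_X}(F_N, δ_0)). -/
/-!
Since `W = X + N`, the product-kernel identity gives
`‖Φ(X,Y) - Φ(W,Y)‖² = 2 k_Y(Y,Y) (κ_X - ψ(N)) ≤ 2 κ_Y (κ_X - ψ(N))`, so by Jensen the distance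
between the two embeddings is at most `√(2 κ_Y (κ_X - E ψ(N)))`. Writing `φ` for a feature map of
`k_X` and `μ_N` for the mean embedding of `F_N`, Cauchy–Schwarz gives
`κ_X - E ψ(N) = ⟪φ(0), φ(0) - μ_N⟫ ≤ √κ_X · MMD_{k_X}(F_N, δ₀)`.

The feature map is not assumed measurable, so `μ_N` is never formed: instead one expands
`‖m⁻¹ ∑ᵢ φ(Nᵢ) - t φ(0)‖² ≥ 0` over `m` i.i.d. copies of `N`, takes expectations, lets `m → ∞`,
and reads off the discriminant of the resulting quadratic in `t`.
-/

open MeasureTheory ProbabilityTheory Filter Topology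
open scoped RealInnerProductSpace

section Sampling

variable {Ω : Type*} [MeasurableSpace Ω] {μ : Measure Ω} [IsProbabilityMeasure μ]
  {ι : Type*} [Fintype ι]

lemma measurePreserving_eval_prod_eval {i j : ι} (hij : i ≠ j) :
    MeasurePreserving (fun x : ι → Ω => (x i, x j)) (Measure.pi fun _ => μ) (μ.prod μ) := by
  refine ⟨by fun_prop, ?_⟩
  have hindep := (iIndepFun_pi (μ := fun _ => μ) (X := fun _ => id)
    (fun _ => aemeasurable_id)).indepFun hij
  have hmap := (indepFun_iff_map_prod_eq_prod_map_map
    (measurable_pi_apply i).aemeasurable (measurable_pi_apply j).aemeasurable).1 hindep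
  rw [hmap, (measurePreserving_eval _ i).map_eq, (measurePreserving_eval _ j).map_eq]

lemma integrable_comp_eval_eval {f : Ω → Ω → ℝ} (hdiag : Integrable (fun ω => f ω ω) μ)
    (hoff : Integrable (fun p : Ω × Ω => f p.1 p.2) (μ.prod μ)) (i j : ι) :
    Integrable (fun x : ι → Ω => f (x i) (x j)) (Measure.pi fun _ => μ) := by
  by_cases hij : i = j
  · subst hij
    exact integrable_comp_eval (μ := fun _ => μ) (i := i) hdiag
  · exact (measurePreserving_eval_prod_eval hij).integrable_comp_of_integrable hoff

lemma integral_comp_eval_eval [DecidableEq ι] {f : Ω → Ω → ℝ}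
    (hdiag : Integrable (fun ω => f ω ω) μ)
    (hoff : Integrable (fun p : Ω × Ω => f p.1 p.2) (μ.prod μ)) (i j : ι) :
    ∫ x : ι → Ω, f (x i) (x j) ∂(Measure.pi fun _ => μ) =
      if i = j then ∫ ω, f ω ω ∂μ else ∫ p : Ω × Ω, f p.1 p.2 ∂(μ.prod μ) := by
  split_ifs with hij
  · subst hij
    exact integral_comp_eval (μ := fun _ => μ) (i := i) hdiag.aestronglyMeasurable
  · rw [← (measurePreserving_eval_prod_eval hij).map_eq] at hoff ⊢
    exact (integral_map (by fun_prop) hoff.aestronglyMeasurable).symm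

lemma integral_sum_sum_comp_eval {f : Ω → Ω → ℝ} (hdiag : Integrable (fun ω => f ω ω) μ)
    (hoff : Integrable (fun p : Ω × Ω => f p.1 p.2) (μ.prod μ)) :
    ∫ x : ι → Ω, ∑ i, ∑ j, f (x i) (x j) ∂(Measure.pi fun _ => μ) =
      Fintype.card ι * ∫ ω, f ω ω ∂μ +
        Fintype.card ι * (Fintype.card ι - 1) * ∫ p : Ω × Ω, f p.1 p.2 ∂(μ.prod μ) := by
  classical
  have hrow (i : ι) : ∑ j, (if i = j then ∫ ω, f ω ω ∂μ else ∫ p : Ω × Ω, f p.1 p.2 ∂(μ.prod μ))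
      = ∫ ω, f ω ω ∂μ + (Fintype.card ι - 1) * ∫ p : Ω × Ω, f p.1 p.2 ∂(μ.prod μ) := by
    rw [← Finset.add_sum_erase _ _ (Finset.mem_univ i), if_pos rfl,
      Finset.sum_congr rfl fun j hj => if_neg (Finset.ne_of_mem_erase hj).symm,
      Finset.sum_const, Finset.card_erase_of_mem (Finset.mem_univ i), nsmul_eq_mul,
      Finset.card_univ, Nat.cast_sub (Fintype.card_pos_iff.2 ⟨i⟩), Nat.cast_one]
  simp_rw [integral_finsetSum _ fun i _ => integrable_finsetSum _ fun j _ =>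
      integrable_comp_eval_eval hdiag hoff i j,
    integral_finsetSum _ fun j _ => integrable_comp_eval_eval hdiag hoff _ j,
    integral_comp_eval_eval hdiag hoff, hrow, Finset.sum_const, Finset.card_univ, nsmul_eq_mul]
  ring

end Sampling

section MeanEmbedding

variable {H : Type*} [NormedAddCommGroup H] [InnerProductSpace ℝ H]

lemma norm_smul_sum_sub_smul_sq {ι : Type*} [Fintype ι] (a t : ℝ) (u : ι → H) (v : H) :
    ‖a • ∑ i, u i - t • v‖ ^ 2 =
      a ^ 2 * ∑ i, ∑ j, ⟪u i, u j⟫ - 2 * t * a * ∑ i, ⟪u i, v⟫ + t ^ 2 * ‖v‖ ^ 2 := by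
  rw [norm_sub_sq_real, ← real_inner_self_eq_norm_sq, ← real_inner_self_eq_norm_sq,
    ← real_inner_self_eq_norm_sq]
  simp only [sum_inner, inner_sum, real_inner_smul_left, real_inner_smul_right,
    ← Finset.mul_sum]
  rw [Finset.sum_comm (f := fun i j => ⟪u j, u i⟫)]
  ring

variable {Ω : Type*} [MeasurableSpace Ω] {μ : Measure Ω} [IsProbabilityMeasure μ]
  {φ : Ω → H} {v : H}

lemma empirical_quadratic_nonneg (ι : Type*) [Fintype ι] [Nonempty ι]
    (hv : Integrable (fun ω => ⟪φ ω, v⟫) μ) (hdiag : Integrable (fun ω => ‖φ ω‖ ^ 2) μ)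
    (hoff : Integrable (fun p : Ω × Ω => ⟪φ p.1, φ p.2⟫) (μ.prod μ)) (t : ℝ) :
    0 ≤ (Fintype.card ι : ℝ)⁻¹ * ∫ ω, ‖φ ω‖ ^ 2 ∂μ
        + (1 - (Fintype.card ι : ℝ)⁻¹) * ∫ p : Ω × Ω, ⟪φ p.1, φ p.2⟫ ∂(μ.prod μ)
        - 2 * t * ∫ ω, ⟪φ ω, v⟫ ∂μ + t ^ 2 * ‖v‖ ^ 2 := by
  have hm : (Fintype.card ι : ℝ) ≠ 0 := by positivity
  simp_rw [← real_inner_self_eq_norm_sq] at hdiag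
  have hsum := integrable_finsetSum (Finset.univ : Finset ι) fun i _ =>
    integrable_comp_eval (μ := fun _ => μ) (i := i) hv
  have hsumsum := integrable_finsetSum (Finset.univ : Finset ι) fun i _ =>
    integrable_finsetSum Finset.univ fun j _ =>
      integrable_comp_eval_eval (f := fun ω ω' => ⟪φ ω, φ ω'⟫) hdiag hoff i j
  have hint := integral_nonneg (μ := Measure.pi fun _ : ι => μ) fun x : ι → Ω =>
    (norm_smul_sum_sub_smul_sq (Fintype.card ι : ℝ)⁻¹ t (fun i => φ (x i)) v) ▸ sq_nonneg _
  rw [integral_add (by exact (hsumsum.const_mul _).sub (hsum.const_mul _)) (integrable_const _),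
    integral_sub (hsumsum.const_mul _) (hsum.const_mul _), integral_const_mul, integral_const_mul,
    integral_sum_sum_comp_eval (f := fun ω ω' => ⟪φ ω, φ ω'⟫) hdiag hoff,
    integral_finsetSum _ fun i _ => integrable_comp_eval (μ := fun _ => μ) (i := i) hv] at hint
  simp only [integral_comp_eval (μ := fun _ => μ) hv.aestronglyMeasurable, Finset.sum_const,
    Finset.card_univ, nsmul_eq_mul, integral_const, probReal_univ, one_smul,
    real_inner_self_eq_norm_sq] at hint
  refine hint.trans_eq ?_
  field_simp

lemma sq_integral_inner_le (hv : Integrable (fun ω => ⟪φ ω, v⟫) μ)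
    (hdiag : Integrable (fun ω => ‖φ ω‖ ^ 2) μ)
    (hoff : Integrable (fun p : Ω × Ω => ⟪φ p.1, φ p.2⟫) (μ.prod μ)) :
    (∫ ω, ⟪φ ω, v⟫ ∂μ) ^ 2 ≤ ‖v‖ ^ 2 * ∫ p : Ω × Ω, ⟪φ p.1, φ p.2⟫ ∂(μ.prod μ) := by
  set A := ∫ p : Ω × Ω, ⟪φ p.1, φ p.2⟫ ∂(μ.prod μ)
  set B := ∫ ω, ⟪φ ω, v⟫ ∂μ
  have hquad (t : ℝ) : 0 ≤ ‖v‖ ^ 2 * (t * t) + (-2 * B) * t + A := by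
    have hcont : Continuous fun s : ℝ => s * ∫ ω, ‖φ ω‖ ^ 2 ∂μ + (1 - s) * A - 2 * t * B
        + t ^ 2 * ‖v‖ ^ 2 := by fun_prop
    have hlim := hcont.tendsto 0
    simp only [zero_mul, zero_add, sub_zero, one_mul] at hlim
    have hlimit := ge_of_tendsto' (hlim.comp (tendsto_inv_atTop_zero.comp
      (tendsto_natCast_atTop_atTop.comp (tendsto_add_atTop_nat 1)))) fun n =>
        by simpa using empirical_quadratic_nonneg (Fin (n + 1)) hv hdiag hoff t
    linarith
  have hdisc := discrim_le_zero hquad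
  rw [discrim] at hdisc
  linarith

end MeanEmbedding

section Application

variable {H : Type*} [NormedAddCommGroup H] [InnerProductSpace ℝ H]
  {Ω : Type*} [MeasurableSpace Ω] {P : Measure Ω} [IsProbabilityMeasure P]

lemma sq_integral_le_mul_integral_sub {E : Type*} [AddCommGroup E] [MeasurableSpace E]
    {ψ : E → ℝ} {φ : E → H} {c : ℝ} (hc : c ≠ 0) (hφ : ∀ x x', ⟪φ x, φ x'⟫ = ψ (x - x') * c)
    {N : Ω → E} (hN : Measurable N) (hψN : Integrable (fun ω => ψ (N ω)) P)
    (hψNN : Integrable (fun p : E × E => ψ (p.1 - p.2)) ((P.map N).prod (P.map N))) :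
    (∫ ω, ψ (N ω) ∂P) ^ 2 ≤ ψ 0 * ∫ p : E × E, ψ (p.1 - p.2) ∂((P.map N).prod (P.map N)) := by
  rw [Measure.map_prod_map P P hN hN] at hψNN ⊢
  have hCS := sq_integral_inner_le (φ := fun ω => φ (N ω)) (v := φ 0) (μ := P)
    (by simpa only [hφ, sub_zero] using hψN.mul_const c)
    (by simp only [← real_inner_self_eq_norm_sq, hφ, sub_self]; exact integrable_const _)
    (by simpa only [hφ, Function.comp_def, Prod.map_fst, Prod.map_snd] using
      (hψNN.comp_measurable (hN.prodMap hN)).mul_const c)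
  simp only [← real_inner_self_eq_norm_sq, hφ, sub_zero, integral_mul_const] at hCS
  rw [integral_map (hN.prodMap hN).aemeasurable hψNN.aestronglyMeasurable,
    ← mul_le_mul_iff_of_pos_left (by positivity : 0 < c ^ 2)]
  simp only [Prod.map_fst, Prod.map_snd]
  linear_combination hCS

lemma sub_le_sqrt_mul_sqrt_of_sq_le {κ a b : ℝ} (hκ : 0 ≤ κ) (h : a ^ 2 ≤ κ * b) :
    κ - a ≤ √κ * √(b + κ - 2 * a) := by
  rw [← Real.sqrt_mul hκ]
  exact (le_abs_self _).trans (Real.abs_le_sqrt (by linear_combination h))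

lemma norm_integral_le_sqrt_integral {V : Ω → H} {b : Ω → ℝ} (hV : Integrable V P)
    (hb : Integrable b P) (hVb : ∀ ω, ‖V ω‖ ^ 2 ≤ b ω) :
    ‖∫ ω, V ω ∂P‖ ≤ √(∫ ω, b ω ∂P) := by
  have hsq : Integrable (fun ω => ‖V ω‖ ^ 2) P :=
    hb.mono' (hV.norm.aestronglyMeasurable.pow 2) (.of_forall fun ω => by
      rw [Real.norm_of_nonneg (sq_nonneg _)]; exact hVb ω)
  have hvar := variance_nonneg (fun ω => ‖V ω‖) P
  rw [variance_eq_sub ((memLp_two_iff_integrable_sq hV.norm.aestronglyMeasurable).2 hsq)] at hvar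
  calc ‖∫ ω, V ω ∂P‖ ≤ ∫ ω, ‖V ω‖ ∂P := norm_integral_le_integral_norm _
    _ ≤ √(∫ ω, ‖V ω‖ ^ 2 ∂P) := Real.le_sqrt_of_sq_le (by simpa using hvar)
    _ ≤ √(∫ ω, b ω ∂P) := Real.sqrt_le_sqrt (integral_mono hsq hb hVb)

lemma norm_sub_sq_of_inner_eq {E 𝒴 : Type*} [AddCommGroup E] {ψ : E → ℝ} {kY : 𝒴 → 𝒴 → ℝ}
    {Φ : E → 𝒴 → H} (hΦ : ∀ x y x' y', ⟪Φ x y, Φ x' y'⟫ = ψ (x - x') * kY y y')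
    (x n : E) (y : 𝒴) :
    ‖Φ x y - Φ (x + n) y‖ ^ 2 = 2 * kY y y * (ψ 0 - ψ n) := by
  rw [norm_sub_sq_real, ← real_inner_self_eq_norm_sq, ← real_inner_self_eq_norm_sq,
    real_inner_comm (Φ (x + n) y), hΦ, hΦ, hΦ]
  simp only [sub_self, add_sub_cancel_left]
  ring

end Application

theorem stmt12_general
    {E 𝒴 : Type*} [AddCommGroup E] [MeasurableSpace E] [MeasurableSpace 𝒴]
    {H : Type*} [NormedAddCommGroup H] [InnerProductSpace ℝ H]
    {Ω : Type*} [MeasurableSpace Ω] (P : Measure Ω) [IsProbabilityMeasure P]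
    (ψ : E → ℝ) (kY : 𝒴 → 𝒴 → ℝ) (κX κY : ℝ)
    (Φ : E → 𝒴 → H)
    (hΦ : ∀ x y x' y', (inner ℝ (Φ x y) (Φ x' y') : ℝ) = ψ (x - x') * kY y y')
    (hψ0 : ψ 0 = κX)
    (hψnn : ∀ x, 0 ≤ ψ x) (hψb : ∀ x, ψ x ≤ κX)
    (hkYnn : ∀ y y', 0 ≤ kY y y') (hkYb : ∀ y y', kY y y' ≤ κY)
    (X N : Ω → E) (Y : Ω → 𝒴) (W : Ω → E)
    (hW : ∀ ω, W ω = X ω + N ω)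
    (hNmeas : Measurable N)
    (hXY : Integrable (fun ω => Φ (X ω) (Y ω)) P)
    (hWY : Integrable (fun ω => Φ (W ω) (Y ω)) P)
    (hψN : Integrable (fun ω => ψ (N ω)) P)
    (hψNN : Integrable (fun p : E × E => ψ (p.1 - p.2)) ((P.map N).prod (P.map N))) :
    ‖(∫ ω, Φ (X ω) (Y ω) ∂P) - ∫ ω, Φ (W ω) (Y ω) ∂P‖
      ≤ Real.sqrt 2 * Real.sqrt κY * Real.sqrt (Real.sqrt κX) *
        Real.sqrt (Real.sqrt
          ((∫ p : E × E, ψ (p.1 - p.2) ∂((P.map N).prod (P.map N))) + κX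
            - 2 * ∫ ω, ψ (N ω) ∂P)) := by
  by_cases hΦ0 : ∀ x y, Φ x y = 0
  · simp only [hΦ0, integral_zero, sub_zero, norm_zero]
    positivity
  simp only [not_forall] at hΦ0
  obtain ⟨x₀, y₀, hx₀⟩ := hΦ0
  have hc : kY y₀ y₀ ≠ 0 := fun h =>
    hx₀ (inner_self_eq_zero.1 ((hΦ x₀ y₀ x₀ y₀).trans (by rw [h, mul_zero])))
  have hκX : 0 ≤ κX := hψ0 ▸ hψnn 0
  have hκY : 0 ≤ κY := (hkYnn y₀ y₀).trans (hkYb y₀ y₀)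
  have hCS := sq_integral_le_mul_integral_sub hc (fun x x' => hΦ x y₀ x' y₀) hNmeas hψN hψNN
  rw [hψ0] at hCS
  have hpt (ω : Ω) : ‖Φ (X ω) (Y ω) - Φ (W ω) (Y ω)‖ ^ 2 ≤ 2 * κY * (κX - ψ (N ω)) := by
    rw [hW, norm_sub_sq_of_inner_eq hΦ, hψ0]
    gcongr
    · exact sub_nonneg.2 (hψb _)
    · exact hkYb _ _
  set b := (∫ p : E × E, ψ (p.1 - p.2) ∂((P.map N).prod (P.map N))) + κX - 2 * ∫ ω, ψ (N ω) ∂P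
  calc ‖(∫ ω, Φ (X ω) (Y ω) ∂P) - ∫ ω, Φ (W ω) (Y ω) ∂P‖
      = ‖∫ ω, (Φ (X ω) (Y ω) - Φ (W ω) (Y ω)) ∂P‖ := by rw [integral_sub hXY hWY]
    _ ≤ √(∫ ω, 2 * κY * (κX - ψ (N ω)) ∂P) :=
      norm_integral_le_sqrt_integral (hXY.sub hWY)
        (((integrable_const _).sub hψN).const_mul _) hpt
    _ = √(2 * κY * (κX - ∫ ω, ψ (N ω) ∂P)) := by
      rw [integral_const_mul, integral_sub (integrable_const _) hψN, integral_const,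
        probReal_univ, one_smul]
    _ ≤ √(2 * κY * (√κX * √b)) := by
      gcongr
      exact sub_le_sqrt_mul_sqrt_of_sq_le hκX hCS
    _ = _ := by
      rw [Real.sqrt_mul (by positivity), Real.sqrt_mul zero_le_two,
        Real.sqrt_mul (Real.sqrt_nonneg κX)]
      ring

/-- **No-pseudo-sampling joint MMD bound.** Under the additive-noise model `W = X + N`
(equivalently, `X = W + N` by symmetry of the roles), with a product kernel
`k = k_X ⊗ k_Y`, `k_X` translation invariant (`k_X(x,x') = ψ(x−x')`, `0 ≤ ψ ≤ κ_X`,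
`ψ(0) = κ_X`), `0 ≤ k_Y ≤ κ_Y`, and joint feature map `Φ`, the MMD between the joint
laws of `(X,Y)` and `(W,Y)` satisfies
`MMD ≤ √2 · κ_Y^{1/2} · κ_X^{1/4} · √(MMD_{k_X}(F_N, δ₀))`, where
`MMD_{k_X}(F_N, δ₀) = √(E ψ(N−N') + κ_X − 2 E ψ(N))` with `N, N'` i.i.d. `F_N`. -/
theorem stmt12
    {E 𝒴 : Type*} [AddCommGroup E] [MeasurableSpace E] [MeasurableSpace 𝒴]
    {H : Type*} [NormedAddCommGroup H] [InnerProductSpace ℝ H] [CompleteSpace H]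
    {Ω : Type*} [MeasurableSpace Ω] (P : Measure Ω) [IsProbabilityMeasure P]
    (ψ : E → ℝ) (kY : 𝒴 → 𝒴 → ℝ) (κX κY : ℝ)
    (Φ : E → 𝒴 → H)
    (hΦ : ∀ x y x' y', (inner ℝ (Φ x y) (Φ x' y') : ℝ) = ψ (x - x') * kY y y')
    (hψ0 : ψ 0 = κX)
    (hψnn : ∀ x, 0 ≤ ψ x) (hψb : ∀ x, ψ x ≤ κX)
    (hkYnn : ∀ y y', 0 ≤ kY y y') (hkYb : ∀ y y', kY y y' ≤ κY)
    (X N : Ω → E) (Y : Ω → 𝒴) (W : Ω → E)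
    (hW : ∀ ω, W ω = X ω + N ω)
    (hNmeas : Measurable N)
    (hXY : Integrable (fun ω => Φ (X ω) (Y ω)) P)
    (hWY : Integrable (fun ω => Φ (W ω) (Y ω)) P)
    (hψN : Integrable (fun ω => ψ (N ω)) P)
    (hψNN : Integrable (fun p : E × E => ψ (p.1 - p.2)) ((P.map N).prod (P.map N))) :
    ‖(∫ ω, Φ (X ω) (Y ω) ∂P) - ∫ ω, Φ (W ω) (Y ω) ∂P‖
      ≤ Real.sqrt 2 * Real.sqrt κY * Real.sqrt (Real.sqrt κX) *
        Real.sqrt (Real.sqrt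
          ((∫ p : E × E, ψ (p.1 - p.2) ∂((P.map N).prod (P.map N))) + κX
            - 2 * ∫ ω, ψ (N ω) ∂P)) :=
  stmt12_general P ψ kY κX κY Φ hΦ hψ0 hψnn hψb hkYnn hkYb X N Y W hW hNmeas hXY hWY hψN hψNN
end
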